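/- arXiv:1506.05254 — 2 statements merged into one kernel-verified Lean document; each statement's English description precedes it below -/
import Mathlib

section
/- Parallel stochastic nodes (graph (3) of Figure 1): let X, Y be finite types, p : ℝ → X → ℝ and q : ℝ → Y → ℝ differentiable parameterized pmfs, and f : X → Y → ℝ. At θ₀ with all probabilities positive, the derivative of θ ↦ ∑ x, ∑ y, p θ x * q θ y * f x y equals ∑ x, ∑ y, p θ₀ x * q θ₀ y * (deriv (fun θ => Real.log (p θ x)) θ₀ + deriv (fun θ => Real.log (q θ y)) θ₀) * f x y. -/
/-!
Differentiate the finite double sum term by term with the product rule, and rewrite each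
derivative `p' = p · (log p)'` (the log-derivative trick), which is legitimate at `θ₀`
because all probabilities are positive there.
-/

open Finset

theorem mul_deriv_log_eq_deriv {g : ℝ → ℝ} {θ : ℝ} (hg : DifferentiableAt ℝ g θ)
    (hθ : g θ ≠ 0) : g θ * deriv (fun t => Real.log (g t)) θ = deriv g θ := by
  rw [deriv.log hg hθ]
  field_simp

theorem hasDerivAt_sum_sum_mul_mul {X Y : Type*} (s : Finset X) (t : Finset Y)
    {p : ℝ → X → ℝ} {q : ℝ → Y → ℝ} (f : X → Y → ℝ) {θ₀ : ℝ}
    (hp : ∀ x, DifferentiableAt ℝ (fun θ => p θ x) θ₀)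
    (hq : ∀ y, DifferentiableAt ℝ (fun θ => q θ y) θ₀) :
    HasDerivAt (fun θ => ∑ x ∈ s, ∑ y ∈ t, p θ x * q θ y * f x y)
      (∑ x ∈ s, ∑ y ∈ t, (deriv (fun θ => p θ x) θ₀ * q θ₀ y +
        p θ₀ x * deriv (fun θ => q θ y) θ₀) * f x y) θ₀ :=
  HasDerivAt.fun_sum fun x _ => HasDerivAt.fun_sum fun y _ =>
    ((hp x).hasDerivAt.mul (hq y).hasDerivAt).mul_const (f x y)

theorem parallel_stochastic_nodes_general
    {X Y : Type*} [Fintype X] [Fintype Y]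
    (p : ℝ → X → ℝ) (q : ℝ → Y → ℝ) (f : X → Y → ℝ) (θ₀ : ℝ)
    (hpdiff : ∀ x, Differentiable ℝ (fun θ => p θ x))
    (hqdiff : ∀ y, Differentiable ℝ (fun θ => q θ y))
    (hppos : ∀ x, 0 < p θ₀ x) (hqpos : ∀ y, 0 < q θ₀ y) :
    deriv (fun θ => ∑ x, ∑ y, p θ x * q θ y * f x y) θ₀ =
      ∑ x, ∑ y, p θ₀ x * q θ₀ y *
        (deriv (fun θ => Real.log (p θ x)) θ₀ +
         deriv (fun θ => Real.log (q θ y)) θ₀) * f x y := by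
  rw [(hasDerivAt_sum_sum_mul_mul univ univ f (fun x => hpdiff x θ₀)
    (fun y => hqdiff y θ₀)).deriv]
  refine sum_congr rfl fun x _ => sum_congr rfl fun y _ => ?_
  rw [← mul_deriv_log_eq_deriv (hpdiff x θ₀) (hppos x).ne',
    ← mul_deriv_log_eq_deriv (hqdiff y θ₀) (hqpos y).ne']
  ring

theorem parallel_stochastic_nodes
    {X Y : Type*} [Fintype X] [Fintype Y]
    (p : ℝ → X → ℝ) (q : ℝ → Y → ℝ) (f : X → Y → ℝ) (θ₀ : ℝ)
    (hpnn : ∀ θ x, 0 ≤ p θ x) (hpsum : ∀ θ, ∑ x, p θ x = 1)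
    (hpdiff : ∀ x, Differentiable ℝ (fun θ => p θ x))
    (hqnn : ∀ θ y, 0 ≤ q θ y) (hqsum : ∀ θ, ∑ y, q θ y = 1)
    (hqdiff : ∀ y, Differentiable ℝ (fun θ => q θ y))
    (hppos : ∀ x, 0 < p θ₀ x) (hqpos : ∀ y, 0 < q θ₀ y) :
    deriv (fun θ => ∑ x, ∑ y, p θ x * q θ y * f x y) θ₀ =
      ∑ x, ∑ y, p θ₀ x * q θ₀ y *
        (deriv (fun θ => Real.log (p θ x)) θ₀ +
         deriv (fun θ => Real.log (q θ y)) θ₀) * f x y :=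
  parallel_stochastic_nodes_general p q f θ₀ hpdiff hqdiff hppos hqpos
end

section
/- Markov reward chain estimator (graph (5) of Figure 1): let X₁, X₂ be finite types, p₁ : ℝ → X₁ → ℝ and p₂ : ℝ → X₁ → X₂ → ℝ differentiable parameterized (conditional) pmfs, and f₁ : X₁ → ℝ, f₂ : X₂ → ℝ costs. Then at θ₀ (all probabilities positive), the derivative of θ ↦ ∑ x₁, ∑ x₂, p₁ θ x₁ * p₂ θ x₁ x₂ * (f₁ x₁ + f₂ x₂) equals ∑ x₁, ∑ x₂, p₁ θ₀ x₁ * p₂ θ₀ x₁ x₂ * (deriv (fun θ => Real.log (p₁ θ x₁)) θ₀ * (f₁ x₁ + f₂ x₂) + deriv (fun θ => Real.log (p₂ θ x₁ x₂)) θ₀ * f₂ x₂). -/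
/-!
Differentiating the product `p₁ θ x₁ * p₂ θ x₁ x₂` gives the terms `p₁' p₂ + p₁ p₂'`, and the
score identity `p * (log p)' = p'` turns these into the score-function form. The only
discrepancy is the term `p₁ f₁ ∑ₓ₂ p₂'`, which vanishes because `∑ₓ₂ p₂ θ x₁ x₂ = 1` for all `θ`:
the cost `f₁ x₁` is already decided before `x₂` is drawn.
-/

open Finset Real

theorem mul_deriv_log_eq_deriv_s7 {f : ℝ → ℝ} {x : ℝ} (hf : DifferentiableAt ℝ f x) (hx : f x ≠ 0) :
    f x * deriv (fun y => log (f y)) x = deriv f x := by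
  rw [deriv.log hf hx, mul_div_cancel₀ _ hx]

theorem sum_deriv_eq_zero_of_sum_eq_const {ι : Type*} [Fintype ι] {p : ℝ → ι → ℝ} {c θ₀ : ℝ}
    (hsum : ∀ θ, ∑ i, p θ i = c) (hp : ∀ i, DifferentiableAt ℝ (fun θ => p θ i) θ₀) :
    ∑ i, deriv (fun θ => p θ i) θ₀ = 0 := by
  rw [← deriv_fun_sum fun i _ => hp i, funext hsum, deriv_const]

theorem hasDerivAt_sum_sum_mul_mul_s7 {X₁ X₂ : Type*} [Fintype X₁] [Fintype X₂]
    {p₁ : ℝ → X₁ → ℝ} {p₂ : ℝ → X₁ → X₂ → ℝ} (g : X₁ → X₂ → ℝ) {θ₀ : ℝ}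
    (hp₁ : ∀ x₁, DifferentiableAt ℝ (fun θ => p₁ θ x₁) θ₀)
    (hp₂ : ∀ x₁ x₂, DifferentiableAt ℝ (fun θ => p₂ θ x₁ x₂) θ₀) :
    HasDerivAt (fun θ => ∑ x₁, ∑ x₂, p₁ θ x₁ * p₂ θ x₁ x₂ * g x₁ x₂)
      (∑ x₁, ∑ x₂, (deriv (fun θ => p₁ θ x₁) θ₀ * p₂ θ₀ x₁ x₂ +
        p₁ θ₀ x₁ * deriv (fun θ => p₂ θ x₁ x₂) θ₀) * g x₁ x₂) θ₀ :=
  HasDerivAt.fun_sum fun x₁ _ => HasDerivAt.fun_sum fun x₂ _ =>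
    ((hp₁ x₁).hasDerivAt.mul (hp₂ x₁ x₂).hasDerivAt).mul_const _

theorem markov_reward_chain_estimator_general
    {X₁ X₂ : Type*} [Fintype X₁] [Fintype X₂]
    (p₁ : ℝ → X₁ → ℝ) (p₂ : ℝ → X₁ → X₂ → ℝ)
    (f₁ : X₁ → ℝ) (f₂ : X₂ → ℝ) (θ₀ : ℝ)
    (hp₁diff : ∀ x₁, Differentiable ℝ (fun θ => p₁ θ x₁))
    (hp₂sum : ∀ θ x₁, ∑ x₂, p₂ θ x₁ x₂ = 1)
    (hp₂diff : ∀ x₁ x₂, Differentiable ℝ (fun θ => p₂ θ x₁ x₂))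
    (hp₁pos : ∀ x₁, 0 < p₁ θ₀ x₁) (hp₂pos : ∀ x₁ x₂, 0 < p₂ θ₀ x₁ x₂) :
    deriv (fun θ => ∑ x₁, ∑ x₂, p₁ θ x₁ * p₂ θ x₁ x₂ * (f₁ x₁ + f₂ x₂)) θ₀ =
      ∑ x₁, ∑ x₂, p₁ θ₀ x₁ * p₂ θ₀ x₁ x₂ *
        (deriv (fun θ => Real.log (p₁ θ x₁)) θ₀ * (f₁ x₁ + f₂ x₂) +
         deriv (fun θ => Real.log (p₂ θ x₁ x₂)) θ₀ * f₂ x₂) := by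
  rw [(hasDerivAt_sum_sum_mul_mul_s7 (fun x₁ x₂ => f₁ x₁ + f₂ x₂)
    (fun x₁ => hp₁diff x₁ θ₀) (fun x₁ x₂ => hp₂diff x₁ x₂ θ₀)).deriv]
  refine sum_congr rfl fun x₁ _ => ?_
  have hscore₁ := mul_deriv_log_eq_deriv_s7 (hp₁diff x₁ θ₀) (hp₁pos x₁).ne'
  have hscore₂ x₂ := mul_deriv_log_eq_deriv_s7 (hp₂diff x₁ x₂ θ₀) (hp₂pos x₁ x₂).ne'
  have hnorm : ∑ x₂, deriv (fun θ => p₂ θ x₁ x₂) θ₀ = 0 :=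
    sum_deriv_eq_zero_of_sum_eq_const (fun θ => hp₂sum θ x₁) fun x₂ => hp₂diff x₁ x₂ θ₀
  calc ∑ x₂, (deriv (fun θ => p₁ θ x₁) θ₀ * p₂ θ₀ x₁ x₂ +
          p₁ θ₀ x₁ * deriv (fun θ => p₂ θ x₁ x₂) θ₀) * (f₁ x₁ + f₂ x₂)
      = ∑ x₂, (deriv (fun θ => p₁ θ x₁) θ₀ * p₂ θ₀ x₁ x₂ * (f₁ x₁ + f₂ x₂) +
          p₁ θ₀ x₁ * deriv (fun θ => p₂ θ x₁ x₂) θ₀ * f₂ x₂) +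
        p₁ θ₀ x₁ * f₁ x₁ * ∑ x₂, deriv (fun θ => p₂ θ x₁ x₂) θ₀ := by
        rw [mul_sum, ← sum_add_distrib]
        exact sum_congr rfl fun x₂ _ => by ring
    _ = _ := by
        rw [hnorm, mul_zero, add_zero]
        refine sum_congr rfl fun x₂ _ => ?_
        linear_combination
          (-(p₂ θ₀ x₁ x₂ * (f₁ x₁ + f₂ x₂))) * hscore₁ - p₁ θ₀ x₁ * f₂ x₂ * hscore₂ x₂

theorem markov_reward_chain_estimator
    {X₁ X₂ : Type*} [Fintype X₁] [Fintype X₂]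
    (p₁ : ℝ → X₁ → ℝ) (p₂ : ℝ → X₁ → X₂ → ℝ)
    (f₁ : X₁ → ℝ) (f₂ : X₂ → ℝ) (θ₀ : ℝ)
    (hp₁nn : ∀ θ x₁, 0 ≤ p₁ θ x₁) (hp₁sum : ∀ θ, ∑ x₁, p₁ θ x₁ = 1)
    (hp₁diff : ∀ x₁, Differentiable ℝ (fun θ => p₁ θ x₁))
    (hp₂nn : ∀ θ x₁ x₂, 0 ≤ p₂ θ x₁ x₂)
    (hp₂sum : ∀ θ x₁, ∑ x₂, p₂ θ x₁ x₂ = 1)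
    (hp₂diff : ∀ x₁ x₂, Differentiable ℝ (fun θ => p₂ θ x₁ x₂))
    (hp₁pos : ∀ x₁, 0 < p₁ θ₀ x₁) (hp₂pos : ∀ x₁ x₂, 0 < p₂ θ₀ x₁ x₂) :
    deriv (fun θ => ∑ x₁, ∑ x₂, p₁ θ x₁ * p₂ θ x₁ x₂ * (f₁ x₁ + f₂ x₂)) θ₀ =
      ∑ x₁, ∑ x₂, p₁ θ₀ x₁ * p₂ θ₀ x₁ x₂ *
        (deriv (fun θ => Real.log (p₁ θ x₁)) θ₀ * (f₁ x₁ + f₂ x₂) +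
         deriv (fun θ => Real.log (p₂ θ x₁ x₂)) θ₀ * f₂ x₂) :=
  markov_reward_chain_estimator_general p₁ p₂ f₁ f₂ θ₀ hp₁diff hp₂sum hp₂diff hp₁pos hp₂pos
end
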